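/- Let k≥0 be an integer, α∈(0,1), Ω⊂ℝ^n a bounded domain with C¹ boundary, and ρ a C¹(Ω̄) defining function of Ω. If u ∈ C^{k,α}(Ω̄)∩C^{k+2,α}(Ω) is such that, for i=1,2, the function ρ^i∇^{k+i}u on Ω extends to a C^α function on Ω̄, then these extensions vanish on ∂Ω; that is, ρ∇^{k+1}u → 0 and ρ²∇^{k+2}u → 0 at every boundary point. -/

import Mathlib

/-
Near a boundary point `x₀`, `∇ρ` is bounded and `ρ` vanishes on `∂Ω`, so `ρ ≤ M d` with
`d = dist(·, ∂Ω)`. Let `w = ρ ∂ᵢ g`, where `g = ∇ᵏu` (first order) or `g = ρ ∇ᵏ⁺¹u` (second order,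
where `ρ ∂ᵢ g = ρ² ∂ᵢ∇ᵏ⁺¹u + νᵢ ρ ∇ᵏ⁺¹u` and the last term already tends to `0`). In both cases `g`
has a limit at `x₀`. If `w` did not tend to `0`, uniform continuity would give `|w| ≥ ε/2` on
balls `B(x, d(x))` around points `x` arbitrarily close to `x₀`; there `|∂ᵢ g| ≥ ε / (4 M d(x))`,
so `g` changes by at least `ε / (8M)` between `x` and `x + (d(x)/2) eᵢ`, contradicting the
existence of its limit.
-/

open Set Filter Topology

noncomputable section

abbrev En (n : ℕ) : Type := EuclideanSpace ℝ (Fin n)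

variable {n : ℕ}

/-- The partial derivative `∂ᵢ w` (computed with the full-space derivative). -/
noncomputable def pd (i : Fin n) (w : En n → ℝ) (x : En n) : ℝ :=
  fderiv ℝ w x (EuclideanSpace.single i 1)

/-- Iterated partial derivatives along a list of coordinate directions. -/
noncomputable def pdAll : List (Fin n) → (En n → ℝ) → En n → ℝ
  | [], w => w
  | i :: l, w => pd i (pdAll l w)

/-- Second-order partial derivative `∂ᵢ∂ⱼ w`. -/
noncomputable def pd2 (i j : Fin n) (w : En n → ℝ) : En n → ℝ := pd i (pd j w)

/-- The sup norm `|w|_{L^∞(E)}`. -/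
noncomputable def supNorm (E : Set (En n)) (w : En n → ℝ) : ℝ :=
  sSup ((fun x => |w x|) '' E)

/-- The Hölder seminorm `[w]_{C^β(E)}`. -/
noncomputable def holderSemi (β : ℝ) (E : Set (En n)) (w : En n → ℝ) : ℝ :=
  sSup ((fun p : En n × En n => |w p.1 - w p.2| / dist p.1 p.2 ^ β) '' (E ×ˢ E))

/-- The Hölder norm `|w|_{C^β(E)} = |w|_{L^∞(E)} + [w]_{C^β(E)}`. -/
noncomputable def holderNorm (β : ℝ) (E : Set (En n)) (w : En n → ℝ) : ℝ :=
  supNorm E w + holderSemi β E w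

/-- `w` is `β`-Hölder continuous on `E`. -/
def IsHolderOn (β : ℝ) (E : Set (En n)) (w : En n → ℝ) : Prop :=
  ∃ C : ℝ, ∀ x ∈ E, ∀ y ∈ E, |w x - w y| ≤ C * dist x y ^ β

/-- `w` is bounded on `E`. -/
def BoundedOn (E : Set (En n)) (w : En n → ℝ) : Prop :=
  ∃ M : ℝ, ∀ x ∈ E, |w x| ≤ M

/-- `w ∈ C^{k,β}(Ē)`: `w` is `C^k` in the open set `Ω`, all derivatives of order `≤ k`
extend continuously to the closure, and the order-`k` derivatives are `β`-Hölder. -/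
def MemHolderBar (k : ℕ) (β : ℝ) (Ω : Set (En n)) (w : En n → ℝ) : Prop :=
  ContinuousOn w (closure Ω) ∧ ContDiffOn ℝ k w Ω ∧
  (∀ l : List (Fin n), l.length ≤ k →
    ∃ g : En n → ℝ, ContinuousOn g (closure Ω) ∧ EqOn (pdAll l w) g Ω) ∧
  (∀ l : List (Fin n), l.length = k → IsHolderOn β Ω (pdAll l w))

/-- `w ∈ C^{k,β}(Ω)`: the interior Hölder class (Hölder on compact subsets). -/
def MemHolderLoc (k : ℕ) (β : ℝ) (Ω : Set (En n)) (w : En n → ℝ) : Prop :=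
  ContDiffOn ℝ k w Ω ∧
  ∀ K : Set (En n), K ⊆ Ω → IsCompact K →
    ∀ l : List (Fin n), l.length = k → IsHolderOn β K (pdAll l w)

/-- The norm `|w|_{C^{k,β}(Ē)}`. -/
noncomputable def holderNormCk (k : ℕ) (β : ℝ) (Ω : Set (En n)) (w : En n → ℝ) : ℝ :=
  (∑ i ∈ Finset.range (k + 1), ∑ v : Fin i → Fin n, supNorm Ω (pdAll (List.ofFn v) w)) +
  ∑ v : Fin k → Fin n, holderSemi β Ω (pdAll (List.ofFn v) w)

/-- The uniformly degenerate operator `L = ρ² a_{ij}∂_{ij} + ρ b_i ∂_i + c`. -/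
noncomputable def Lop (ρ : En n → ℝ) (a : Fin n → Fin n → En n → ℝ)
    (b : Fin n → En n → ℝ) (c : En n → ℝ) (w : En n → ℝ) (x : En n) : ℝ :=
  (ρ x) ^ 2 * ∑ i, ∑ j, a i j x * pd2 i j w x
    + ρ x * ∑ i, b i x * pd i w x + c x * w x

/-- Symmetry and uniform ellipticity `λ|ξ|² ≤ a_{ij}ξ_iξ_j ≤ Λ|ξ|²` on `E`. -/
def Elliptic (E : Set (En n)) (a : Fin n → Fin n → En n → ℝ) (lam Lam : ℝ) : Prop :=
  (∀ i j, ∀ x : En n, a i j x = a j i x) ∧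
  ∀ x ∈ E, ∀ ξ : Fin n → ℝ,
    lam * (∑ i, ξ i ^ 2) ≤ (∑ i, ∑ j, a i j x * ξ i * ξ j) ∧
    (∑ i, ∑ j, a i j x * ξ i * ξ j) ≤ Lam * (∑ i, ξ i ^ 2)

/-- The characteristic polynomial `P(μ) = μ(μ-1)a_{ij}ν_iν_j + μ b_iν_i + c`,
expressed through a function `ν` recording the boundary values of `∇ρ`. -/
def Pchar (a : Fin n → Fin n → En n → ℝ) (b : Fin n → En n → ℝ) (c : En n → ℝ)
    (ν : En n → Fin n → ℝ) (μ : ℝ) (x : En n) : ℝ :=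
  μ * (μ - 1) * (∑ i, ∑ j, a i j x * ν x i * ν x j) + μ * (∑ i, b i x * ν x i) + c x

/-- `ρ` is a defining function for `Ω`, with `ν` the continuous extension of `∇ρ`
to the closure, of unit length on the boundary. -/
def DefiningFn (Ω : Set (En n)) (ρ : En n → ℝ) (ν : En n → Fin n → ℝ) : Prop :=
  (∀ x ∈ Ω, 0 < ρ x) ∧ (∀ x ∈ frontier Ω, ρ x = 0) ∧
  ContinuousOn ρ (closure Ω) ∧ ContDiffOn ℝ 1 ρ Ω ∧
  (∀ i, ContinuousOn (fun x => ν x i) (closure Ω)) ∧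
  (∀ x ∈ Ω, ∀ i, ν x i = pd i ρ x) ∧
  (∀ x ∈ frontier Ω, (∑ i, (ν x i) ^ 2) = 1)

end

open Set Filter Topology

open Metric

section PartialDerivatives

variable {n : ℕ}

lemma pd_mul {i : Fin n} {f w : En n → ℝ} {x : En n} (hf : DifferentiableAt ℝ f x)
    (hw : DifferentiableAt ℝ w x) :
    pd i (fun y => f y * w y) x = f x * pd i w x + w x * pd i f x := by
  simp [pd, fderiv_fun_mul hf hw]

lemma norm_fderiv_le_sum_abs_pd (w : En n → ℝ) (x : En n) :
    ‖fderiv ℝ w x‖ ≤ ∑ j, |pd j w x| := by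
  refine ContinuousLinearMap.opNorm_le_bound _ (by positivity) fun ξ => ?_
  have hξ : ξ = ∑ j, ξ j • EuclideanSpace.single j (1 : ℝ) := by
    simpa using ((EuclideanSpace.basisFun (Fin n) ℝ).sum_repr ξ).symm
  calc ‖fderiv ℝ w x ξ‖ = |∑ j, ξ j * pd j w x| := by
        conv_lhs => rw [hξ]
        simp [pd, Real.norm_eq_abs]
    _ ≤ ∑ j, |ξ j| * |pd j w x| := by
        simpa only [abs_mul] using Finset.abs_sum_le_sum_abs (fun j => ξ j * pd j w x) Finset.univ
    _ ≤ ∑ j, ‖ξ‖ * |pd j w x| := by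
        gcongr with j
        exact PiLp.norm_apply_le ξ j
    _ = (∑ j, |pd j w x|) * ‖ξ‖ := by rw [← Finset.mul_sum, mul_comm]

lemma contDiffOn_pdAll {Ω : Set (En n)} (hΩ : IsOpen Ω) {w : En n → ℝ} (m : ℕ) :
    ∀ l : List (Fin n), ContDiffOn ℝ (m + l.length : ℕ) w Ω → ContDiffOn ℝ m (pdAll l w) Ω
  | [], h => by simpa [pdAll] using h
  | i :: l, h => by
    have hl : ContDiffOn ℝ (m + 1 : ℕ) (pdAll l w) Ω :=
      contDiffOn_pdAll hΩ (m + 1) l (by simpa [add_assoc, add_comm 1] using h)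
    exact (ContinuousLinearMap.apply ℝ ℝ (EuclideanSpace.single i 1)).contDiff.comp_contDiffOn
      (hl.fderiv_of_isOpen hΩ (m := m) (by norm_cast))

end PartialDerivatives

section DistanceToComplement

variable {X : Type*} [PseudoMetricSpace X] {Ω : Set X} {x₀ : X}

lemma eventually_forall_ball_infDist_compl (hx₀ : x₀ ∉ Ω) {Q : X → Prop}
    (hQ : ∀ᶠ y in 𝓝[Ω] x₀, Q y) :
    ∀ᶠ x in 𝓝[Ω] x₀, ∀ y ∈ ball x (infDist x Ωᶜ), Q y := by
  obtain ⟨η, hη, hηQ⟩ := Metric.mem_nhdsWithin_iff.1 hQ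
  filter_upwards [nhdsWithin_le_nhds (ball_mem_nhds x₀ (half_pos hη))] with x hx y hy
  refine hηQ ⟨?_, ball_infDist_compl_subset hy⟩
  have hxx₀ : infDist x Ωᶜ ≤ dist x x₀ := infDist_le_dist_of_mem (show x₀ ∈ Ωᶜ from hx₀)
  rw [mem_ball] at hx hy ⊢
  linarith [dist_triangle y x x₀]

lemma infDist_compl_pos (hΩ : IsOpen Ω) (hx₀ : x₀ ∉ Ω) {x : X} (hx : x ∈ Ω) :
    0 < infDist x Ωᶜ :=
  (hΩ.isClosed_compl.notMem_iff_infDist_pos ⟨x₀, hx₀⟩).1 (by simpa using hx)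

end DistanceToComplement

section NormedSpace

variable {E : Type*} [NormedAddCommGroup E] [NormedSpace ℝ E] {Ω : Set E} {x₀ v : E}

lemma tendsto_add_half_infDist_compl_smul (hΩ : IsOpen Ω) (hx₀ : x₀ ∉ Ω) (hv : ‖v‖ = 1) :
    Tendsto (fun x => x + (infDist x Ωᶜ / 2) • v) (𝓝[Ω] x₀) (𝓝[Ω] x₀) := by
  refine tendsto_nhdsWithin_iff.2 ⟨?_, eventually_mem_nhdsWithin.mono fun x hx => ?_⟩
  · have hcont : Continuous (fun x => x + (infDist x Ωᶜ / 2) • v) :=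
      continuous_id.add (((continuous_infDist_pt _).div_const 2).smul continuous_const)
    simpa [infDist_zero_of_mem (show x₀ ∈ Ωᶜ from hx₀)] using
      (hcont.tendsto x₀).mono_left nhdsWithin_le_nhds
  · have hr := infDist_compl_pos hΩ hx₀ hx
    refine ball_infDist_compl_subset (x := x) ?_
    rw [mem_ball, dist_eq_norm, add_sub_cancel_left, norm_smul, hv, mul_one,
      Real.norm_of_nonneg (by positivity)]
    linarith

/-- Compare `f x` with `f` at points of `ball x (dist(x, Ωᶜ))` tending to a nearest point of
`Ωᶜ`, where `f` vanishes. -/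
lemma le_mul_infDist_compl_of_norm_fderiv_le [ProperSpace E] (hΩ : IsOpen Ω) {f : E → ℝ}
    (hfc : ContinuousOn f (closure Ω)) (hf0 : ∀ z ∈ frontier Ω, f z = 0)
    (hf : DifferentiableOn ℝ f Ω) (hx₀ : x₀ ∉ Ω) {M : ℝ} {x : E} (hx : x ∈ Ω)
    (hM : ∀ y ∈ ball x (infDist x Ωᶜ), ‖fderiv ℝ f y‖ ≤ M) :
    f x ≤ M * infDist x Ωᶜ := by
  obtain ⟨z, hzΩ, hrz⟩ := hΩ.isClosed_compl.exists_infDist_eq_dist ⟨x₀, hx₀⟩ x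
  set r := infDist x Ωᶜ
  have hr : 0 < r := infDist_compl_pos hΩ hx₀ hx
  have hballΩ : ball x r ⊆ Ω := ball_infDist_compl_subset
  have hzball : z ∈ closure (ball x r) := by
    rw [closure_ball x hr.ne', mem_closedBall, dist_comm, ← hrz]
  have hzcl : z ∈ closure Ω := closure_mono hballΩ hzball
  have hlip : ∀ y ∈ ball x r, f x ≤ f y + M * dist y x := fun y hy => by
    have := (convex_ball x r).norm_image_sub_le_of_norm_fderiv_le
      (fun p hp => hf.differentiableAt (hΩ.mem_nhds (hballΩ hp))) hM hy (mem_ball_self hr)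
    rw [Real.norm_eq_abs, ← dist_eq_norm, dist_comm] at this
    linarith [le_abs_self (f x - f y)]
  have hlim : Tendsto (fun y => f y + M * dist y x) (𝓝[ball x r] z) (𝓝 (M * r)) := by
    have hfz : Tendsto f (𝓝[ball x r] z) (𝓝 0) := by
      rw [← hf0 z (by rw [hΩ.frontier_eq]; exact ⟨hzcl, hzΩ⟩)]
      exact (hfc z hzcl).mono (hballΩ.trans subset_closure)
    have hdist : Tendsto (fun y => dist y x) (𝓝[ball x r] z) (𝓝 r) := by
      rw [hrz, dist_comm]
      exact (continuous_id.dist continuous_const).continuousWithinAt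
    simpa using hfz.add (hdist.const_mul M)
  have := mem_closure_iff_nhdsWithin_neBot.1 hzball
  exact ge_of_tendsto hlim (eventually_mem_nhdsWithin.mono hlip)

lemma eventually_le_mul_infDist_compl [ProperSpace E] (hΩ : IsOpen Ω) {f : E → ℝ}
    (hfc : ContinuousOn f (closure Ω)) (hf0 : ∀ z ∈ frontier Ω, f z = 0)
    (hf : DifferentiableOn ℝ f Ω) (hx₀ : x₀ ∉ Ω) {M : ℝ}
    (hM : ∀ᶠ y in 𝓝[Ω] x₀, ‖fderiv ℝ f y‖ ≤ M) :
    ∀ᶠ x in 𝓝[Ω] x₀, f x ≤ M * infDist x Ωᶜ := by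
  filter_upwards [eventually_mem_nhdsWithin, eventually_forall_ball_infDist_compl hx₀ hM]
    with x hx hxM
  exact le_mul_infDist_compl_of_norm_fderiv_le hΩ hfc hf0 hf hx₀ hx hxM

lemma mul_le_sub_of_le_fderiv_on_ball (hv : ‖v‖ = 1) {g : E → ℝ} {x : E} {r c t : ℝ}
    (hg : ∀ y ∈ ball x r, DifferentiableAt ℝ g y ∧ c ≤ fderiv ℝ g y v) (ht : t ∈ Ico 0 r) :
    c * t ≤ g (x + t • v) - g x := by
  have hline : ∀ τ ∈ Icc 0 t, x + τ • v ∈ ball x r := fun τ hτ => by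
    rw [mem_ball, dist_eq_norm, add_sub_cancel_left, norm_smul, hv, mul_one,
      Real.norm_of_nonneg hτ.1]
    exact hτ.2.trans_lt ht.2
  have hderiv : ∀ τ ∈ Icc 0 t,
      HasDerivAt (fun τ => g (x + τ • v)) (fderiv ℝ g (x + τ • v) v) τ := fun τ hτ => by
    have hl : HasDerivAt (fun τ : ℝ => x + τ • v) v τ := by
      simpa using ((hasDerivAt_id τ).smul_const v).const_add x
    exact (hg _ (hline τ hτ)).1.hasFDerivAt.comp_hasDerivAt τ hl
  have := (convex_Icc 0 t).mul_sub_le_image_sub_of_le_deriv (f := fun τ => g (x + τ • v))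
    (fun τ hτ => (hderiv τ hτ).continuousAt.continuousWithinAt)
    (fun τ hτ => (hderiv τ (interior_subset hτ)).differentiableAt.differentiableWithinAt)
    (fun τ hτ => (hderiv τ (interior_subset hτ)).deriv ▸ (hg _ (hline τ (interior_subset hτ))).2)
    0 (left_mem_Icc.2 ht.1) t (right_mem_Icc.2 ht.1) ht.1
  simpa using this

end NormedSpace

section WeightedDerivative

variable {E : Type*} [NormedAddCommGroup E] [NormedSpace ℝ E] {Ω : Set E} {x₀ v : E}
  {ρ g : E → ℝ} {M L : ℝ}

lemma not_frequently_le_mul_fderiv_on_ball_infDist (hΩ : IsOpen Ω) (hx₀ : x₀ ∉ Ω)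
    (hv : ‖v‖ = 1) {ε : ℝ} (hε : 0 < ε) (hM : 0 < M) (hρpos : ∀ x ∈ Ω, 0 < ρ x)
    (hρ : ∀ᶠ x in 𝓝[Ω] x₀, ρ x ≤ M * infDist x Ωᶜ) (hg : DifferentiableOn ℝ g Ω)
    (hgL : Tendsto g (𝓝[Ω] x₀) (𝓝 L)) :
    ¬ ∃ᶠ x in 𝓝[Ω] x₀, ∀ y ∈ ball x (infDist x Ωᶜ), ε ≤ ρ y * fderiv ℝ g y v := by
  intro hfreq
  have hincr : ∃ᶠ x in 𝓝[Ω] x₀,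
      ε / (4 * M) ≤ g (x + (infDist x Ωᶜ / 2) • v) - g x := by
    refine (hfreq.and_eventually (eventually_mem_nhdsWithin.and
      (eventually_forall_ball_infDist_compl hx₀ hρ))).mono ?_
    rintro x ⟨hεx, hx, hρx⟩
    set r := infDist x Ωᶜ
    have hr : 0 < r := infDist_compl_pos hΩ hx₀ hx
    have hbound : ∀ y ∈ ball x r,
        DifferentiableAt ℝ g y ∧ ε / (2 * M * r) ≤ fderiv ℝ g y v := fun y hy => by
      have hyΩ : y ∈ Ω := ball_infDist_compl_subset hy
      refine ⟨hg.differentiableAt (hΩ.mem_nhds hyΩ), ?_⟩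
      have hρy : ρ y ≤ 2 * M * r :=
        calc ρ y ≤ M * infDist y Ωᶜ := hρx y hy
          _ ≤ M * (r + dist y x) := by gcongr; exact infDist_le_infDist_add_dist
          _ ≤ 2 * M * r := by nlinarith [mem_ball.1 hy]
      calc ε / (2 * M * r) ≤ ε / ρ y := div_le_div_of_nonneg_left hε.le (hρpos y hyΩ) hρy
        _ ≤ fderiv ℝ g y v := by
          rw [div_le_iff₀ (hρpos y hyΩ), mul_comm]
          exact hεx y hy
    calc ε / (4 * M) = ε / (2 * M * r) * (r / 2) := by field_simp; ring
      _ ≤ _ := mul_le_sub_of_le_fderiv_on_ball hv hbound ⟨(half_pos hr).le, half_lt_self hr⟩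
  have hlim : Tendsto (fun x => g (x + (infDist x Ωᶜ / 2) • v) - g x) (𝓝[Ω] x₀) (𝓝 0) := by
    simpa using (hgL.comp (tendsto_add_half_infDist_compl_smul hΩ hx₀ hv)).sub hgL
  have hsmall := hlim.eventually (gt_mem_nhds (show 0 < ε / (4 * M) by positivity))
  obtain ⟨x, hx, hx'⟩ := (hincr.and_eventually hsmall).exists
  exact lt_irrefl _ (hx.trans_lt hx')

theorem tendsto_zero_of_uniformContinuousOn_of_tendsto_sub (hΩ : IsOpen Ω) (hx₀ : x₀ ∉ Ω)
    (hv : ‖v‖ = 1) (hM : 0 < M) (hρpos : ∀ x ∈ Ω, 0 < ρ x)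
    (hρ : ∀ᶠ x in 𝓝[Ω] x₀, ρ x ≤ M * infDist x Ωᶜ) (hg : DifferentiableOn ℝ g Ω)
    (hgL : Tendsto g (𝓝[Ω] x₀) (𝓝 L)) {w : E → ℝ} (hw : UniformContinuousOn w Ω)
    (hgw : Tendsto (fun x => ρ x * fderiv ℝ g x v - w x) (𝓝[Ω] x₀) (𝓝 0)) :
    Tendsto w (𝓝[Ω] x₀) (𝓝 0) := by
  rw [Metric.tendsto_nhds]
  intro ε hε
  by_contra hfreq
  rw [Filter.not_eventually] at hfreq
  obtain ⟨δ, hδ, hwδ⟩ := Metric.uniformContinuousOn_iff.1 hw (ε / 4) (by positivity)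
  have hnear : ∀ᶠ x in 𝓝[Ω] x₀, x ∈ Ω ∧ infDist x Ωᶜ < δ := by
    filter_upwards [eventually_mem_nhdsWithin, nhdsWithin_le_nhds (ball_mem_nhds x₀ hδ)]
      with x hx hxδ
    exact ⟨hx, (infDist_le_dist_of_mem (show x₀ ∈ Ωᶜ from hx₀)).trans_lt hxδ⟩
  have herr : ∀ᶠ x in 𝓝[Ω] x₀, ∀ y ∈ ball x (infDist x Ωᶜ),
      |ρ y * fderiv ℝ g y v - w y| < ε / 4 :=
    eventually_forall_ball_infDist_compl hx₀
      (by simpa using hgw.eventually (Metric.ball_mem_nhds 0 (by positivity : 0 < ε / 4)))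
  have hsplit : (∃ᶠ x in 𝓝[Ω] x₀, ∀ y ∈ ball x (infDist x Ωᶜ),
        ε / 2 ≤ ρ y * fderiv ℝ g y v) ∨
      ∃ᶠ x in 𝓝[Ω] x₀, ∀ y ∈ ball x (infDist x Ωᶜ),
        ε / 2 ≤ ρ y * fderiv ℝ (fun z => -g z) y v := by
    rw [← frequently_or_distrib]
    refine (hfreq.and_eventually (hnear.and herr)).mono ?_
    rintro x ⟨hwx, ⟨hx, hxδ⟩, hxerr⟩
    have hclose : ∀ y ∈ ball x (infDist x Ωᶜ), |w y - w x| < ε / 4 := fun y hy =>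
      hwδ y (ball_infDist_compl_subset hy) x hx ((mem_ball.1 hy).trans hxδ)
    rw [Real.dist_eq, sub_zero, not_lt, le_abs'] at hwx
    rcases hwx with hwx | hwx
    · refine Or.inr fun y hy => ?_
      have h1 := abs_lt.1 (hclose y hy)
      have h2 := abs_lt.1 (hxerr y hy)
      rw [fderiv_fun_neg, neg_apply]
      linarith
    · refine Or.inl fun y hy => ?_
      have h1 := abs_lt.1 (hclose y hy)
      have h2 := abs_lt.1 (hxerr y hy)
      linarith
  rcases hsplit with hpos | hneg
  · exact not_frequently_le_mul_fderiv_on_ball_infDist hΩ hx₀ hv (half_pos hε) hM hρpos hρ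
      hg hgL hpos
  · exact not_frequently_le_mul_fderiv_on_ball_infDist hΩ hx₀ hv (half_pos hε) hM hρpos hρ
      hg.neg hgL.neg hneg

end WeightedDerivative

lemma IsHolderOn.uniformContinuousOn {n : ℕ} {β : ℝ} {E : Set (En n)} {w : En n → ℝ}
    (h : IsHolderOn β E w) (hβ : 0 < β) : UniformContinuousOn w E := by
  obtain ⟨C, hC⟩ := h
  rw [Metric.uniformContinuousOn_iff]
  intro ε hε
  have hC' : 0 < max C 1 := lt_max_of_lt_right one_pos
  refine ⟨(ε / max C 1) ^ β⁻¹, by positivity, fun x hx y hy hxy => ?_⟩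
  calc dist (w x) (w y) = |w x - w y| := Real.dist_eq _ _
    _ ≤ C * dist x y ^ β := hC x hx y hy
    _ ≤ max C 1 * dist x y ^ β := by gcongr; exact le_max_left _ _
    _ < max C 1 * ((ε / max C 1) ^ β⁻¹) ^ β := by gcongr
    _ = ε := by rw [Real.rpow_inv_rpow (by positivity) hβ.ne']; field_simp

namespace DefiningFn

variable {n : ℕ} {Ω : Set (En n)} {ρ : En n → ℝ} {ν : En n → Fin n → ℝ} {x₀ : En n}

lemma tendsto_nu (hdef : DefiningFn Ω ρ ν) (hx₀ : x₀ ∈ closure Ω) (j : Fin n) :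
    Tendsto (fun x => ν x j) (𝓝[Ω] x₀) (𝓝 (ν x₀ j)) :=
  (hdef.2.2.2.2.1 j x₀ hx₀).mono subset_closure

lemma differentiableOn (hdef : DefiningFn Ω ρ ν) : DifferentiableOn ℝ ρ Ω :=
  hdef.2.2.2.1.differentiableOn one_ne_zero

lemma exists_eventually_le_mul_infDist (hdef : DefiningFn Ω ρ ν) (hΩ : IsOpen Ω)
    (hx₀ : x₀ ∈ frontier Ω) : ∃ M > 0, ∀ᶠ x in 𝓝[Ω] x₀, ρ x ≤ M * infDist x Ωᶜ := by
  have hlim : Tendsto (fun x => ∑ j, |ν x j|) (𝓝[Ω] x₀) (𝓝 (∑ j, |ν x₀ j|)) :=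
    tendsto_finsetSum _ fun j _ => (hdef.tendsto_nu (frontier_subset_closure hx₀) j).abs
  have hρd := hdef.differentiableOn
  obtain ⟨-, hρ0, hρc, -, -, hνρ, -⟩ := hdef
  refine ⟨∑ j, |ν x₀ j| + 1, by positivity,
    eventually_le_mul_infDist_compl hΩ hρc hρ0 hρd (hΩ.frontier_eq ▸ hx₀).2 ?_⟩
  filter_upwards [hlim.eventually (gt_mem_nhds (lt_add_one _)), eventually_mem_nhdsWithin]
    with x hxM hx
  calc ‖fderiv ℝ ρ x‖ ≤ ∑ j, |pd j ρ x| := norm_fderiv_le_sum_abs_pd ρ x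
    _ = ∑ j, |ν x j| := by simp only [hνρ x hx]
    _ ≤ ∑ j, |ν x₀ j| + 1 := hxM.le

lemma tendsto_rho_mul_pd_zero (hdef : DefiningFn Ω ρ ν) (hΩ : IsOpen Ω) (hx₀ : x₀ ∈ frontier Ω)
    {i : Fin n} {g : En n → ℝ} {L : ℝ} (hg : DifferentiableOn ℝ g Ω)
    (hgL : Tendsto g (𝓝[Ω] x₀) (𝓝 L)) (hw : UniformContinuousOn (fun x => ρ x * pd i g x) Ω) :
    Tendsto (fun x => ρ x * pd i g x) (𝓝[Ω] x₀) (𝓝 0) := by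
  obtain ⟨M, hM, hρM⟩ := hdef.exists_eventually_le_mul_infDist hΩ hx₀
  exact tendsto_zero_of_uniformContinuousOn_of_tendsto_sub hΩ (hΩ.frontier_eq ▸ hx₀).2
    (v := EuclideanSpace.single i 1) (by simp)
    hM hdef.1 hρM hg hgL hw (by simpa [pd] using tendsto_const_nhds)

lemma tendsto_rho_sq_mul_pd_zero (hdef : DefiningFn Ω ρ ν) (hΩ : IsOpen Ω)
    (hx₀ : x₀ ∈ frontier Ω) {i : Fin n} {v : En n → ℝ} (hv : DifferentiableOn ℝ v Ω)
    (hv0 : Tendsto (fun x => ρ x * v x) (𝓝[Ω] x₀) (𝓝 0))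
    (hw : UniformContinuousOn (fun x => ρ x ^ 2 * pd i v x) Ω) :
    Tendsto (fun x => ρ x ^ 2 * pd i v x) (𝓝[Ω] x₀) (𝓝 0) := by
  obtain ⟨M, hM, hρM⟩ := hdef.exists_eventually_le_mul_infDist hΩ hx₀
  have hρd := hdef.differentiableOn
  have hrem : Tendsto (fun x => ν x i * (ρ x * v x)) (𝓝[Ω] x₀) (𝓝 0) := by
    simpa using (hdef.tendsto_nu (frontier_subset_closure hx₀) i).mul hv0
  obtain ⟨hρpos, -, -, -, -, hνρ, -⟩ := hdef
  refine tendsto_zero_of_uniformContinuousOn_of_tendsto_sub hΩ (hΩ.frontier_eq ▸ hx₀).2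
    (v := EuclideanSpace.single i 1) (by simp) hM hρpos hρM (g := fun x => ρ x * v x)
    (hρd.mul hv) hv0 hw ?_
  refine hrem.congr' (eventually_mem_nhdsWithin.mono fun x hx => ?_)
  change _ = ρ x * pd i (fun y => ρ y * v y) x - ρ x ^ 2 * pd i v x
  rw [pd_mul (hρd.differentiableAt (hΩ.mem_nhds hx)) (hv.differentiableAt (hΩ.mem_nhds hx)),
    hνρ x hx i]
  ring

end DefiningFn

theorem weighted_derivatives_vanish_on_boundary_general
    {n k : ℕ} {α : ℝ} (hα : α ∈ Ioo (0 : ℝ) 1)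
    (Ω : Set (En n)) (hΩo : IsOpen Ω)
    (ρ : En n → ℝ) (ν : En n → Fin n → ℝ)
    (hdef : DefiningFn Ω ρ ν)
    (u : En n → ℝ)
    (hu : MemHolderBar k α Ω u) (huloc : MemHolderLoc (k + 2) α Ω u)
    (h1 : ∀ l : List (Fin n), l.length = k + 1 →
      IsHolderOn α Ω (fun x => ρ x * pdAll l u x))
    (h2 : ∀ l : List (Fin n), l.length = k + 2 →
      IsHolderOn α Ω (fun x => (ρ x) ^ 2 * pdAll l u x)) :
    (∀ l : List (Fin n), l.length = k + 1 →
      ∀ x₀ ∈ frontier Ω,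
        Tendsto (fun x => ρ x * pdAll l u x) (𝓝[Ω] x₀) (𝓝 0)) ∧
    (∀ l : List (Fin n), l.length = k + 2 →
      ∀ x₀ ∈ frontier Ω,
        Tendsto (fun x => (ρ x) ^ 2 * pdAll l u x) (𝓝[Ω] x₀) (𝓝 0)) := by
  have hdiff : ∀ l : List (Fin n), l.length ≤ k + 1 → DifferentiableOn ℝ (pdAll l u) Ω :=
    fun l hl => (contDiffOn_pdAll hΩo 1 l (huloc.1.of_le (by norm_cast; omega))).differentiableOn
      one_ne_zero
  have part1 : ∀ l : List (Fin n), l.length = k + 1 → ∀ x₀ ∈ frontier Ω,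
      Tendsto (fun x => ρ x * pdAll l u x) (𝓝[Ω] x₀) (𝓝 0) := by
    rintro (_ | ⟨i, l⟩) hl x₀ hx₀
    · simp at hl
    have hl : l.length = k := by simpa using hl
    obtain ⟨G, hGc, hGeq⟩ := hu.2.2.1 l hl.le
    have hlim : Tendsto (pdAll l u) (𝓝[Ω] x₀) (𝓝 (G x₀)) :=
      ((hGc x₀ (frontier_subset_closure hx₀)).mono subset_closure).congr'
        (eventuallyEq_nhdsWithin_of_eqOn hGeq).symm
    exact hdef.tendsto_rho_mul_pd_zero hΩo hx₀ (hdiff l (by omega)) hlim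
      ((h1 (i :: l) (by simpa using hl)).uniformContinuousOn hα.1)
  refine ⟨part1, ?_⟩
  rintro (_ | ⟨i, l⟩) hl x₀ hx₀
  · simp at hl
  have hl : l.length = k + 1 := by simpa using hl
  exact hdef.tendsto_rho_sq_mul_pd_zero hΩo hx₀ (hdiff l hl.le) (part1 l hl x₀ hx₀)
    ((h2 (i :: l) (by simpa using hl)).uniformContinuousOn hα.1)

/-- **Vanishing of the weighted derivatives on the boundary**: if
`u ∈ C^{k,α}(Ω̄) ∩ C^{k+2,α}(Ω)` and `ρ^i ∇^{k+i} u` extends `C^α` to `Ω̄` for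
`i = 1, 2`, then the extensions vanish on `∂Ω`. -/
theorem weighted_derivatives_vanish_on_boundary
    {n k : ℕ} {α : ℝ} (hα : α ∈ Ioo (0 : ℝ) 1)
    (Ω : Set (En n)) (hΩo : IsOpen Ω) (hΩb : Bornology.IsBounded Ω)
    (hΩconn : IsConnected Ω)
    (ρ : En n → ℝ) (ν : En n → Fin n → ℝ)
    (hdef : DefiningFn Ω ρ ν)
    (u : En n → ℝ)
    (hu : MemHolderBar k α Ω u) (huloc : MemHolderLoc (k + 2) α Ω u)
    (h1 : ∀ l : List (Fin n), l.length = k + 1 →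
      IsHolderOn α Ω (fun x => ρ x * pdAll l u x))
    (h2 : ∀ l : List (Fin n), l.length = k + 2 →
      IsHolderOn α Ω (fun x => (ρ x) ^ 2 * pdAll l u x)) :
    (∀ l : List (Fin n), l.length = k + 1 →
      ∀ x₀ ∈ frontier Ω,
        Tendsto (fun x => ρ x * pdAll l u x) (𝓝[Ω] x₀) (𝓝 0)) ∧
    (∀ l : List (Fin n), l.length = k + 2 →
      ∀ x₀ ∈ frontier Ω,
        Tendsto (fun x => (ρ x) ^ 2 * pdAll l u x) (𝓝[Ω] x₀) (𝓝 0)) :=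
  weighted_derivatives_vanish_on_boundary_general hα Ω hΩo ρ ν hdef u hu huloc h1 h2
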